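/- arXiv:1610.09030 — 7 statements merged into one kernel-verified Lean document; each statement's English description precedes it below -/
import Mathlib

section
/- For a two-qubit X state ρ_X with diagonal entries a,b,c,d and off-diagonal entries e (corners) and f (center), satisfying |e| ≤ √(ad) and |f| ≤ √(bc), the concurrence equals 2·max{0, |e| − √(bc), |f| − √(ad)}. -/
open Matrix Polynomial ComplexOrder

/-- A two-qubit X state (as a 4×4 complex matrix) with diagonal `a,b,c,d`,
corner off-diagonal entries `e` and center off-diagonal entries `f` (all real). -/
noncomputable def Xmat (a b c d e f : ℝ) : Matrix (Fin 4) (Fin 4) ℂ :=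
  !![(a : ℂ), 0, 0, (e : ℂ);
     0, (b : ℂ), (f : ℂ), 0;
     0, (f : ℂ), (c : ℂ), 0;
     (e : ℂ), 0, 0, (d : ℂ)]

/-- `σ_y ⊗ σ_y` as a 4×4 matrix. -/
noncomputable def YY : Matrix (Fin 4) (Fin 4) ℂ :=
  !![0, 0, 0, -1;
     0, 0, 1, 0;
     0, 1, 0, 0;
     -1, 0, 0, 0]

/-- The matrix `ρ (σ_y⊗σ_y) ρ* (σ_y⊗σ_y)` whose eigenvalues are the squares of the
`λᵢ` appearing in the definition of concurrence. -/
noncomputable def spinFlipProd (ρ : Matrix (Fin 4) (Fin 4) ℂ) : Matrix (Fin 4) (Fin 4) ℂ :=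
  ρ * YY * ρ.map (starRingEnd ℂ) * YY

/-!
Since `ρ_X` has real entries, `ρ* = ρ`, and the spin-flipped product
`ρ (σ_y⊗σ_y) ρ (σ_y⊗σ_y)` is again X-shaped. Its characteristic polynomial therefore splits into
those of the outer block `[[ad + e², 2ae], [2de, ad + e²]]` and the inner block
`[[bc + f², 2bf], [2cf, bc + f²]]`, whose roots are `(√(ad) ± |e|)²` and `(√(bc) ± |f|)²`.
The bounds `|e| ≤ √(ad)`, `|f| ≤ √(bc)` make these four square roots nonnegative, so they are the
`λᵢ`. Their sum is `2√(ad) + 2√(bc)` and the largest is `max (√(ad) + |e|) (√(bc) + |f|)`, so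
`λ₁ - λ₂ - λ₃ - λ₄ = 2λ₁ - ∑ λᵢ = 2 max (|e| - √(bc)) (|f| - √(ad))`.
-/

theorem Xmat_map_conj (a b c d e f : ℝ) :
    (Xmat a b c d e f).map (starRingEnd ℂ) = Xmat a b c d e f := by
  ext i j
  fin_cases i <;> fin_cases j <;> simp [Xmat]

theorem spinFlipProd_Xmat (a b c d e f : ℝ) :
    spinFlipProd (Xmat a b c d e f) =
      !![(a * d + e ^ 2 : ℂ), 0, 0, 2 * a * e;
         0, b * c + f ^ 2, 2 * b * f, 0;
         0, 2 * c * f, b * c + f ^ 2, 0;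
         2 * d * e, 0, 0, a * d + e ^ 2] := by
  rw [spinFlipProd, Xmat_map_conj]
  ext i j
  fin_cases i <;> fin_cases j <;> simp [Xmat, YY, Matrix.mul_apply, Fin.sum_univ_four] <;> ring

theorem charpoly_xShape {R : Type*} [CommRing R] (p q r s t u v w : R) :
    (!![p, 0, 0, q; 0, s, t, 0; 0, u, v, 0; r, 0, 0, w] : Matrix (Fin 4) (Fin 4) R).charpoly =
      (X ^ 2 - C (p + w) * X + C (p * w - q * r)) *
        (X ^ 2 - C (s + v) * X + C (s * v - t * u)) := by
  rw [Matrix.charpoly, Matrix.det_succ_row_zero]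
  simp [Fin.sum_univ_succ, Matrix.det_fin_three, charmatrix_apply, Fin.succAbove]
  ring

theorem X_sub_C_mul_X_sub_C {R : Type*} [CommRing R] (x y : R) :
    (X - C x) * (X - C y) = X ^ 2 - C (x + y) * X + C (x * y) := by
  simp only [C_add, C_mul]; ring

theorem X_sub_C_mul_X_sub_C_sqrt_abs {a d : ℝ} (e : ℝ) (had : 0 ≤ a * d) :
    (X - C (((√(a * d) + |e| : ℝ) : ℂ) ^ 2)) * (X - C (((√(a * d) - |e| : ℝ) : ℂ) ^ 2)) =
      X ^ 2 - C ((a * d + e ^ 2 : ℂ) + (a * d + e ^ 2)) * X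
        + C ((a * d + e ^ 2 : ℂ) * (a * d + e ^ 2) - 2 * a * e * (2 * d * e)) := by
  have hsq : √(a * d) ^ 2 = a * d := Real.sq_sqrt had
  have hsum : (√(a * d) + |e|) ^ 2 + (√(a * d) - |e|) ^ 2 = (a * d + e ^ 2) + (a * d + e ^ 2) := by
    nlinarith [sq_abs e]
  have hprod : (√(a * d) + |e|) ^ 2 * (√(a * d) - |e|) ^ 2
      = (a * d + e ^ 2) * (a * d + e ^ 2) - 2 * a * e * (2 * d * e) := by
    have : (√(a * d) + |e|) * (√(a * d) - |e|) = a * d - e ^ 2 := by nlinarith [sq_abs e]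
    rw [← mul_pow, this]; ring
  have hsumC : ((√(a * d) + |e| : ℝ) : ℂ) ^ 2 + ((√(a * d) - |e| : ℝ) : ℂ) ^ 2
      = (a * d + e ^ 2 : ℂ) + (a * d + e ^ 2) := by exact_mod_cast hsum
  have hprodC : ((√(a * d) + |e| : ℝ) : ℂ) ^ 2 * ((√(a * d) - |e| : ℝ) : ℂ) ^ 2
      = (a * d + e ^ 2 : ℂ) * (a * d + e ^ 2) - 2 * a * e * (2 * d * e) := by exact_mod_cast hprod
  rw [X_sub_C_mul_X_sub_C, hsumC, hprodC]

theorem charpoly_spinFlipProd_Xmat {a b c d : ℝ} (e f : ℝ) (had : 0 ≤ a * d) (hbc : 0 ≤ b * c) :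
    (spinFlipProd (Xmat a b c d e f)).charpoly =
      ∏ i, (X - C ((↑(![√(a * d) + |e|, √(a * d) - |e|, √(b * c) + |f|, √(b * c) - |f|] i) : ℂ)
        ^ 2)) := by
  rw [spinFlipProd_Xmat, charpoly_xShape, Fin.prod_univ_four]
  simp only [Matrix.cons_val]
  rw [mul_assoc ((X - C _) * (X - C _)), X_sub_C_mul_X_sub_C_sqrt_abs e had,
    X_sub_C_mul_X_sub_C_sqrt_abs f hbc]

theorem roots_prod_X_sub_C_map {ι R : Type*} [CommRing R] [IsDomain R]
    (s : Finset ι) (g : ι → R) : (∏ i ∈ s, (X - C (g i))).roots = s.val.map g := by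
  have h := roots_multiset_prod_X_sub_C (s.val.map g)
  rwa [Multiset.map_map, Function.comp_def, ← Finset.prod_eq_multiset_prod] at h

theorem map_eq_of_prod_X_sub_C_sq_eq {ι : Type*} [Fintype ι] {l s : ι → ℝ}
    (hl : ∀ i, 0 ≤ l i) (hs : ∀ i, 0 ≤ s i)
    (h : ∏ i, (X - C ((l i : ℂ) ^ 2)) = ∏ i, (X - C ((s i : ℂ) ^ 2))) :
    Finset.univ.val.map l = Finset.univ.val.map s := by
  have hroots := congrArg roots h
  rw [roots_prod_X_sub_C_map, roots_prod_X_sub_C_map] at hroots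
  have := congrArg (Multiset.map fun z : ℂ => √z.re) hroots
  simpa [Multiset.map_map, Function.comp_def, ← Complex.ofReal_pow, Real.sqrt_sq, hl, hs] using this

theorem isGreatest_range_of_map_eq {α : Type*} [LinearOrder α] {n : ℕ} {l s : Fin (n + 1) → α}
    (hl : Antitone l) (h : Finset.univ.val.map l = Finset.univ.val.map s) :
    IsGreatest (Set.range s) (l 0) := by
  constructor
  · obtain ⟨i, -, hi⟩ := Multiset.mem_map.1 (h ▸ Multiset.mem_map_of_mem l (Finset.mem_univ 0))
    exact ⟨i, hi⟩
  · rintro _ ⟨j, rfl⟩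
    obtain ⟨i, -, hi⟩ := Multiset.mem_map.1 (h.symm ▸ Multiset.mem_map_of_mem s (Finset.mem_univ j))
    exact hi ▸ hl (Fin.zero_le i)

theorem sub_sub_sub_eq_of_map_eq {l : Fin 4 → ℝ} (hl : Antitone l) {x y z w : ℝ}
    (hy : 0 ≤ y) (hw : 0 ≤ w)
    (h : Finset.univ.val.map l = Finset.univ.val.map ![x + y, x - y, z + w, z - w]) :
    l 0 - l 1 - l 2 - l 3 = 2 * max (y - z) (w - x) := by
  have hsum : l 0 + l 1 + l 2 + l 3 = 2 * x + 2 * z := by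
    have := congrArg Multiset.sum h
    simp only [← Finset.sum_eq_multiset_sum, Fin.sum_univ_four] at this
    simp only [this, Matrix.cons_val]
    ring
  have hmax : l 0 = max (x + y) (z + w) := by
    refine (isGreatest_range_of_map_eq hl h).unique ⟨?_, ?_⟩
    · rcases le_total (x + y) (z + w) with hle | hle
      · exact ⟨2, by simp [max_eq_right hle]⟩
      · exact ⟨0, by simp [max_eq_left hle]⟩
    · rintro _ ⟨i, rfl⟩
      have := le_max_left (x + y) (z + w)
      have := le_max_right (x + y) (z + w)
      fin_cases i <;> simp only [Fin.reduceFinMk, Fin.zero_eta, Fin.mk_one, Matrix.cons_val]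
        <;> linarith
  have hshift : max (y - z) (w - x) = max (x + y) (z + w) - (x + z) := by
    rw [← max_sub_sub_right]; ring_nf
  linarith

theorem concurrence_Xstate_general (a b c d e f : ℝ)
    (ha : 0 ≤ a) (hb : 0 ≤ b) (hc : 0 ≤ c) (hd : 0 ≤ d)
    (he : |e| ≤ Real.sqrt (a * d)) (hf : |f| ≤ Real.sqrt (b * c))
    (lam : Fin 4 → ℝ) (hlam_nn : ∀ i, 0 ≤ lam i) (hlam_dec : Antitone lam)
    (hchar : (spinFlipProd (Xmat a b c d e f)).charpoly
      = ∏ i : Fin 4, (X - C (((lam i : ℝ) : ℂ) ^ 2))) :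
    max 0 (lam 0 - lam 1 - lam 2 - lam 3)
      = 2 * max 0 (max (|e| - Real.sqrt (b * c)) (|f| - Real.sqrt (a * d))) := by
  have hmap : Finset.univ.val.map lam =
      Finset.univ.val.map ![√(a * d) + |e|, √(a * d) - |e|, √(b * c) + |f|, √(b * c) - |f|] := by
    refine map_eq_of_prod_X_sub_C_sq_eq hlam_nn (fun i => ?_)
      (hchar.symm.trans (charpoly_spinFlipProd_Xmat e f (mul_nonneg ha hd) (mul_nonneg hb hc)))
    fin_cases i <;> simp only [Fin.reduceFinMk, Fin.zero_eta, Fin.mk_one, Matrix.cons_val]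
      <;> linarith [Real.sqrt_nonneg (a * d), Real.sqrt_nonneg (b * c), abs_nonneg e, abs_nonneg f]
  rw [sub_sub_sub_eq_of_map_eq hlam_dec (abs_nonneg e) (abs_nonneg f) hmap,
    mul_max_of_nonneg 0 _ zero_le_two, mul_zero]

/-- For a two-qubit X state with `|e| ≤ √(ad)` and `|f| ≤ √(bc)`, the concurrence
`max{0, λ₁ − λ₂ − λ₃ − λ₄}` (where `λᵢ` are the square roots, in decreasing order,
of the eigenvalues of `ρ(σ_y⊗σ_y)ρ*(σ_y⊗σ_y)`) equals
`2 max{0, |e| − √(bc), |f| − √(ad)}`. -/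
theorem concurrence_Xstate (a b c d e f : ℝ)
    (ha : 0 ≤ a) (hb : 0 ≤ b) (hc : 0 ≤ c) (hd : 0 ≤ d)
    (hρ : (Xmat a b c d e f).PosSemidef) (htr : (Xmat a b c d e f).trace = 1)
    (he : |e| ≤ Real.sqrt (a * d)) (hf : |f| ≤ Real.sqrt (b * c))
    (lam : Fin 4 → ℝ) (hlam_nn : ∀ i, 0 ≤ lam i) (hlam_dec : Antitone lam)
    (hchar : (spinFlipProd (Xmat a b c d e f)).charpoly
      = ∏ i : Fin 4, (X - C (((lam i : ℝ) : ℂ) ^ 2))) :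
    max 0 (lam 0 - lam 1 - lam 2 - lam 3)
      = 2 * max 0 (max (|e| - Real.sqrt (b * c)) (|f| - Real.sqrt (a * d))) :=
  concurrence_Xstate_general a b c d e f ha hb hc hd he hf lam hlam_nn hlam_dec hchar
end

section
/- A Bell-diagonal two-qubit state with correlation vector (r₁,r₂,r₃) is separable if and only if |r₁| + |r₂| + |r₃| ≤ 1. -/
open Matrix ComplexOrder Kronecker

/-- The Pauli matrices. -/
noncomputable def pauli : Fin 3 → Matrix (Fin 2) (Fin 2) ℂ :=
  ![!![0, 1; 1, 0], !![0, -Complex.I; Complex.I, 0], !![1, 0; 0, -1]]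

/-- The Bell-diagonal state with correlation vector `r`. -/
noncomputable def BD (r : Fin 3 → ℝ) : Matrix (Fin 2 × Fin 2) (Fin 2 × Fin 2) ℂ :=
  (1 / 4 : ℂ) • (1 + ∑ i : Fin 3, ((r i : ℝ) : ℂ) • (pauli i ⊗ₖ pauli i))

/-- A two-qubit state is separable if it is a convex combination of product states. -/
def SeparableState (ρ : Matrix (Fin 2 × Fin 2) (Fin 2 × Fin 2) ℂ) : Prop :=
  ∃ (k : ℕ) (w : Fin k → ℝ) (A B : Fin k → Matrix (Fin 2) (Fin 2) ℂ),
    (∀ i, 0 ≤ w i) ∧ (∑ i, w i = 1) ∧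
    (∀ i, (A i).PosSemidef ∧ (A i).trace = 1) ∧
    (∀ i, (B i).PosSemidef ∧ (B i).trace = 1) ∧
    ρ = ∑ i, ((w i : ℝ) : ℂ) • (A i ⊗ₖ B i)

/- ### Auxiliary definitions and lemmas -/

lemma pauli_herm (i : Fin 3) : (pauli i)ᴴ = pauli i := by
  fin_cases i <;> ext a b <;> fin_cases a <;> fin_cases b <;>
    simp [pauli, Complex.ext_iff]

/-- Spin projectors `(1 ± σᵢ)/2`. -/
noncomputable def Pm (i : Fin 3) (e : ℝ) : Matrix (Fin 2) (Fin 2) ℂ :=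
  (1/2 : ℂ) • (1 + (e : ℂ) • pauli i)

/-- The maximally mixed one-qubit state. -/
noncomputable def cM : Matrix (Fin 2) (Fin 2) ℂ := (1/2 : ℂ) • 1

lemma psd_of_proj {n : Type*} [Fintype n] [DecidableEq n] {P : Matrix n n ℂ}
    (h1 : Pᴴ = P) (h2 : P * P = P) : P.PosSemidef := by
  have := Matrix.posSemidef_conjTranspose_mul_self P
  rwa [h1, h2] at this

lemma Pm_psd (i : Fin 3) {e : ℝ} (he : e = 1 ∨ e = -1) : (Pm i e).PosSemidef := by
  apply psd_of_proj
  · rcases he with rfl | rfl <;> fin_cases i <;> ext a b <;> fin_cases a <;> fin_cases b <;>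
      simp [Pm, pauli, Complex.ext_iff] <;> ring
  · rcases he with rfl | rfl <;> fin_cases i <;> ext a b <;> fin_cases a <;> fin_cases b <;>
      simp [Pm, pauli, Matrix.mul_apply, Fin.sum_univ_two, Matrix.one_apply,
        Complex.ext_iff] <;> norm_num

lemma Pm_trace (i : Fin 3) (e : ℝ) : (Pm i e).trace = 1 := by
  fin_cases i <;>
    simp [Pm, Matrix.trace, pauli, Fin.sum_univ_two, Matrix.one_apply] <;> ring

lemma cM_psd : cM.PosSemidef := by
  have h : cM = Matrix.diagonal (fun _ => (1/2 : ℂ)) := by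
    ext a b; fin_cases a <;> fin_cases b <;> simp [cM, Matrix.one_apply]
  rw [h]
  exact Matrix.PosSemidef.diagonal (fun i => by norm_num [Complex.le_def])

lemma cM_trace : cM.trace = 1 := by
  simp [cM, Matrix.trace, Fin.sum_univ_two, Matrix.one_apply]

/-- Weights of the explicit separable decomposition. -/
noncomputable def Wv (r : Fin 3 → ℝ) : Fin 13 → ℝ :=
  ![1 - (|r 0| + |r 1| + |r 2|),
    (|r 0|+r 0)/4, (|r 0|+r 0)/4, (|r 0|-r 0)/4, (|r 0|-r 0)/4,
    (|r 1|+r 1)/4, (|r 1|+r 1)/4, (|r 1|-r 1)/4, (|r 1|-r 1)/4,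
    (|r 2|+r 2)/4, (|r 2|+r 2)/4, (|r 2|-r 2)/4, (|r 2|-r 2)/4]

noncomputable def Av : Fin 13 → Matrix (Fin 2) (Fin 2) ℂ :=
  ![cM, Pm 0 1, Pm 0 (-1), Pm 0 1, Pm 0 (-1), Pm 1 1, Pm 1 (-1), Pm 1 1, Pm 1 (-1),
    Pm 2 1, Pm 2 (-1), Pm 2 1, Pm 2 (-1)]

noncomputable def Bv : Fin 13 → Matrix (Fin 2) (Fin 2) ℂ :=
  ![cM, Pm 0 1, Pm 0 (-1), Pm 0 (-1), Pm 0 1, Pm 1 1, Pm 1 (-1), Pm 1 (-1), Pm 1 1,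
    Pm 2 1, Pm 2 (-1), Pm 2 (-1), Pm 2 1]

set_option maxHeartbeats 2000000 in
lemma BD_decomp (r : Fin 3 → ℝ) :
    BD r = ∑ j : Fin 13, ((Wv r j : ℝ) : ℂ) • (Av j ⊗ₖ Bv j) := by
  ext x y
  obtain ⟨a, b⟩ := x
  obtain ⟨c, d⟩ := y
  fin_cases a <;> fin_cases b <;> fin_cases c <;> fin_cases d <;>
    simp [BD, Wv, Av, Bv, Pm, cM, pauli, Fin.sum_univ_succ, Fin.sum_univ_three,
      Matrix.sum_apply, Matrix.one_apply, Complex.ext_iff, Prod.ext_iff] <;>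
    first
      | decide
      | (push_cast; ring)

set_option maxHeartbeats 1000000 in
lemma corr (r : Fin 3 → ℝ) (i : Fin 3) :
    ((pauli i ⊗ₖ pauli i) * BD r).trace = (r i : ℂ) := by
  fin_cases i <;>
    simp [BD, pauli, Matrix.trace, Matrix.mul_apply, Fintype.sum_prod_type,
      Fin.sum_univ_two, Fin.sum_univ_three, Matrix.sum_apply, Matrix.one_apply,
      Complex.ext_iff, Prod.ext_iff] <;>
    push_cast <;> ring

lemma trace_pauli_real {M : Matrix (Fin 2) (Fin 2) ℂ} (hM : M.IsHermitian) (i : Fin 3) :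
    (((pauli i * M).trace.re : ℝ) : ℂ) = (pauli i * M).trace := by
  apply Complex.conj_eq_iff_re.mp
  calc (starRingEnd ℂ) (pauli i * M).trace = ((pauli i * M)ᴴ).trace := by
        rw [Matrix.trace_conjTranspose]; rfl
    _ = (Mᴴ * (pauli i)ᴴ).trace := by rw [Matrix.conjTranspose_mul]
    _ = (M * pauli i).trace := by rw [hM.eq, pauli_herm]
    _ = (pauli i * M).trace := Matrix.trace_mul_comm _ _

/-- The Bloch vector of a one-qubit state has norm at most one. -/
lemma bloch {M : Matrix (Fin 2) (Fin 2) ℂ} (hM : M.PosSemidef) (ht : M.trace = 1) :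
    ((pauli 0 * M).trace.re)^2 + ((pauli 1 * M).trace.re)^2 + ((pauli 2 * M).trace.re)^2 ≤ 1 := by
  have herm := hM.1
  have h01 : M 1 0 = (starRingEnd ℂ) (M 0 1) := by
    have := congrFun (congrFun herm.eq 1) 0; simpa [Matrix.conjTranspose_apply] using this.symm
  have h00 : (M 0 0).im = 0 := by
    have := congrFun (congrFun herm.eq 0) 0
    have := congrArg Complex.im this
    simp [Matrix.conjTranspose_apply] at this; linarith
  have h11 : (M 1 1).im = 0 := by
    have := congrFun (congrFun herm.eq 1) 1
    have := congrArg Complex.im this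
    simp [Matrix.conjTranspose_apply] at this; linarith
  set a := (M 0 0).re
  set d := (M 1 1).re
  set b := M 0 1
  have htr : a + d = 1 := by
    have h : M.trace = 1 := ht
    rw [Matrix.trace_fin_two] at h
    have := congrArg Complex.re h
    simpa using this
  have key1 := hM.re_dotProduct_nonneg ![M 0 1, -(M 0 0)]
  have key2 := hM.re_dotProduct_nonneg ![-(M 1 1), M 1 0]
  simp only [dotProduct, Matrix.mulVec, Fin.sum_univ_two, Pi.star_apply, RCLike.star_def,
    Matrix.cons_val_zero, Matrix.cons_val_one, Matrix.head_cons, RCLike.re_to_complex] at key1 key2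
  have e1 : 0 ≤ a * (a * d - Complex.normSq b) := by
    rw [h01] at key1
    simp [Complex.ext_iff, Complex.normSq_apply, h00, h11] at key1 ⊢
    nlinarith [key1]
  have e2 : 0 ≤ d * (a * d - Complex.normSq b) := by
    rw [h01] at key2
    simp [Complex.ext_iff, Complex.normSq_apply, h00, h11] at key2 ⊢
    nlinarith [key2]
  have hdet : Complex.normSq b ≤ a * d := by nlinarith [e1, e2, htr]
  have t0 : (pauli 0 * M).trace.re = 2 * b.re := by
    simp [pauli, Matrix.trace, Matrix.mul_apply, Matrix.vecMul, dotProduct,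
      Fin.sum_univ_two, h01]
    ring
  have t1 : (pauli 1 * M).trace.re = -(2 * b.im) := by
    simp [pauli, Matrix.trace, Matrix.mul_apply, Matrix.vecMul, dotProduct,
      Fin.sum_univ_two, h01]
    ring
  have t2 : (pauli 2 * M).trace.re = a - d := by
    simp [pauli, Matrix.trace, Matrix.mul_apply, Matrix.vecMul, dotProduct,
      Fin.sum_univ_two]
    ring
  rw [t0, t1, t2]
  have hnsq : Complex.normSq b = b.re^2 + b.im^2 := by simp [Complex.normSq_apply]; ring
  nlinarith [hdet, htr, hnsq]

/-- A (physical) Bell-diagonal two-qubit state with correlation vector `(r₁,r₂,r₃)`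
is separable iff `|r₁| + |r₂| + |r₃| ≤ 1`. -/
theorem BD_separable_iff (r : Fin 3 → ℝ) (hr : (BD r).PosSemidef) :
    SeparableState (BD r) ↔ |r 0| + |r 1| + |r 2| ≤ 1 := by
  constructor
  · rintro ⟨k, w, A, B, hw, hw1, hA, hB, hρ⟩
    set tA : Fin k → Fin 3 → ℝ := fun j i => (pauli i * A j).trace.re with htA
    set tB : Fin k → Fin 3 → ℝ := fun j i => (pauli i * B j).trace.re with htB
    have hcorr : ∀ i, r i = ∑ j, w j * (tA j i * tB j i) := by
      intro i
      have h1 : ((pauli i ⊗ₖ pauli i) * BD r).trace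
          = ∑ j, ((w j : ℝ) : ℂ) * ((pauli i * A j).trace * (pauli i * B j).trace) := by
        rw [hρ, Finset.mul_sum]
        simp only [Matrix.mul_smul, Matrix.trace_sum, Matrix.trace_smul,
          ← Matrix.mul_kronecker_mul, Matrix.trace_kronecker, smul_eq_mul]
      rw [corr] at h1
      have h2 : ((r i : ℝ) : ℂ)
          = ((∑ j, w j * (tA j i * tB j i) : ℝ) : ℂ) := by
        rw [h1]
        push_cast
        refine Finset.sum_congr rfl fun j _ => ?_
        rw [trace_pauli_real (hA j).1.1 i, trace_pauli_real (hB j).1.1 i]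
      exact_mod_cast h2
    have habs : ∀ i, |r i| ≤ ∑ j, w j * (|tA j i| * |tB j i|) := by
      intro i
      rw [hcorr i]
      refine (Finset.abs_sum_le_sum_abs _ _).trans (le_of_eq ?_)
      refine Finset.sum_congr rfl fun j _ => ?_
      rw [abs_mul, abs_mul, abs_of_nonneg (hw j)]
    have hper : ∀ j, |tA j 0| * |tB j 0| + |tA j 1| * |tB j 1| + |tA j 2| * |tB j 2| ≤ 1 := by
      intro j
      have hAb := bloch (hA j).1 (hA j).2
      have hBb := bloch (hB j).1 (hB j).2
      have s0 := sq_nonneg (|tA j 0| - |tB j 0|)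
      have s1 := sq_nonneg (|tA j 1| - |tB j 1|)
      have s2 := sq_nonneg (|tA j 2| - |tB j 2|)
      nlinarith [sq_abs (tA j 0), sq_abs (tA j 1), sq_abs (tA j 2),
        sq_abs (tB j 0), sq_abs (tB j 1), sq_abs (tB j 2)]
    calc |r 0| + |r 1| + |r 2|
        ≤ ∑ j, w j * (|tA j 0| * |tB j 0| + |tA j 1| * |tB j 1| + |tA j 2| * |tB j 2|) := by
          rw [show (∑ j, w j * (|tA j 0| * |tB j 0| + |tA j 1| * |tB j 1| + |tA j 2| * |tB j 2|))
              = (∑ j, w j * (|tA j 0| * |tB j 0|)) + (∑ j, w j * (|tA j 1| * |tB j 1|))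
                + (∑ j, w j * (|tA j 2| * |tB j 2|)) by
            rw [← Finset.sum_add_distrib, ← Finset.sum_add_distrib]
            exact Finset.sum_congr rfl fun j _ => by ring]
          exact add_le_add (add_le_add (habs 0) (habs 1)) (habs 2)
      _ ≤ ∑ j, w j * 1 := by
          refine Finset.sum_le_sum fun j _ => ?_
          exact mul_le_mul_of_nonneg_left (hper j) (hw j)
      _ = 1 := by simp [hw1]
  · intro h
    refine ⟨13, Wv r, Av, Bv, ?_, ?_, ?_, ?_, BD_decomp r⟩
    · intro j
      fin_cases j <;>
        first
          | (show (0:ℝ) ≤ 1 - (|r 0| + |r 1| + |r 2|); linarith)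
          | (show (0:ℝ) ≤ (|r 0| + r 0)/4; cases abs_cases (r 0) <;> linarith)
          | (show (0:ℝ) ≤ (|r 0| - r 0)/4; cases abs_cases (r 0) <;> linarith)
          | (show (0:ℝ) ≤ (|r 1| + r 1)/4; cases abs_cases (r 1) <;> linarith)
          | (show (0:ℝ) ≤ (|r 1| - r 1)/4; cases abs_cases (r 1) <;> linarith)
          | (show (0:ℝ) ≤ (|r 2| + r 2)/4; cases abs_cases (r 2) <;> linarith)
          | (show (0:ℝ) ≤ (|r 2| - r 2)/4; cases abs_cases (r 2) <;> linarith)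
    · simp [Wv, Fin.sum_univ_succ]
      ring
    · intro j
      fin_cases j <;>
        exact ⟨by first | exact cM_psd | exact Pm_psd _ (Or.inl rfl) | exact Pm_psd _ (Or.inr rfl),
          by first | exact cM_trace | exact Pm_trace _ _⟩
    · intro j
      fin_cases j <;>
        exact ⟨by first | exact cM_psd | exact Pm_psd _ (Or.inl rfl) | exact Pm_psd _ (Or.inr rfl),
          by first | exact cM_trace | exact Pm_trace _ _⟩
end

section
/- For a Bell-diagonal state with correlation vector (r₁,r₂,r₃), the set of zero-discord (classical-classical) Bell-diagonal states corresponds to points on the three coordinate axes, and the squared Euclidean distance from (r₁,r₂,r₃) to this set equals min{r₂²+r₃², r₁²+r₃², r₁²+r₂²}. -/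
open Metric

/-- The squared Euclidean distance from a Bell-diagonal correlation vector
`(r₁,r₂,r₃)` to the set of classical-classical (zero-discord) Bell-diagonal
correlation vectors — the three coordinate axes — equals
`min{r₂²+r₃², r₁²+r₃², r₁²+r₂²}`. -/
theorem sq_dist_to_classical_axes (r : EuclideanSpace ℝ (Fin 3)) :
    let axes : Set (EuclideanSpace ℝ (Fin 3)) :=
      {x | (x 1 = 0 ∧ x 2 = 0) ∨ (x 0 = 0 ∧ x 2 = 0) ∨ (x 0 = 0 ∧ x 1 = 0)}
    (infDist r axes) ^ 2
      = min (min (r 1 ^ 2 + r 2 ^ 2) (r 0 ^ 2 + r 2 ^ 2)) (r 0 ^ 2 + r 1 ^ 2) := by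
  intro axes
  set m : ℝ := min (min (r 1 ^ 2 + r 2 ^ 2) (r 0 ^ 2 + r 2 ^ 2)) (r 0 ^ 2 + r 1 ^ 2) with hm
  have hm0 : 0 ≤ m := by
    apply le_min (le_min (by positivity) (by positivity)) (by positivity)
  -- the three candidate points
  have hdist : ∀ (k : Fin 3),
      dist r (EuclideanSpace.single k (r k)) =
        Real.sqrt (∑ i : Fin 3, (if i = k then 0 else r i ^ 2)) := by
    intro k
    rw [EuclideanSpace.dist_eq]
    congr 1
    apply Finset.sum_congr rfl
    intro i _
    by_cases h : i = k
    · subst h; simp [EuclideanSpace.single_apply, Real.dist_eq]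
    · simp [h, EuclideanSpace.single_apply, Real.dist_eq, sq_abs]
  have h0 : dist r (EuclideanSpace.single 0 (r 0)) = Real.sqrt (r 1 ^ 2 + r 2 ^ 2) := by
    rw [hdist 0, Fin.sum_univ_three]; norm_num [Fin.ext_iff]
  have h1 : dist r (EuclideanSpace.single 1 (r 1)) = Real.sqrt (r 0 ^ 2 + r 2 ^ 2) := by
    rw [hdist 1, Fin.sum_univ_three]; norm_num [Fin.ext_iff]
  have h2 : dist r (EuclideanSpace.single 2 (r 2)) = Real.sqrt (r 0 ^ 2 + r 1 ^ 2) := by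
    rw [hdist 2, Fin.sum_univ_three]; norm_num [Fin.ext_iff]
  have mem0 : (EuclideanSpace.single (0 : Fin 3) (r 0)) ∈ axes := by
    left; constructor <;> simp [EuclideanSpace.single_apply]
  have mem1 : (EuclideanSpace.single (1 : Fin 3) (r 1)) ∈ axes := by
    right; left; constructor <;> simp [EuclideanSpace.single_apply]
  have mem2 : (EuclideanSpace.single (2 : Fin 3) (r 2)) ∈ axes := by
    right; right; constructor <;> simp [EuclideanSpace.single_apply]
  have hne : axes.Nonempty := ⟨_, mem0⟩
  have key : infDist r axes = Real.sqrt m := by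
    apply le_antisymm
    · -- upper bound: m equals one of the three values
      rcases min_cases (min (r 1 ^ 2 + r 2 ^ 2) (r 0 ^ 2 + r 2 ^ 2)) (r 0 ^ 2 + r 1 ^ 2) with
        ⟨hA, _⟩ | ⟨hA, _⟩
      · rcases min_cases (r 1 ^ 2 + r 2 ^ 2) (r 0 ^ 2 + r 2 ^ 2) with ⟨hB, _⟩ | ⟨hB, _⟩
        · rw [hm, hA, hB, ← h0]; exact infDist_le_dist_of_mem mem0
        · rw [hm, hA, hB, ← h1]; exact infDist_le_dist_of_mem mem1
      · rw [hm, hA, ← h2]; exact infDist_le_dist_of_mem mem2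
    · -- lower bound
      haveI : Nonempty ↥axes := hne.to_subtype
      rw [infDist_eq_iInf]
      apply le_ciInf
      rintro ⟨y, hy⟩
      show Real.sqrt m ≤ dist r y
      have hyd : dist r y = Real.sqrt (∑ i : Fin 3, (r i - y i) ^ 2) := by
        rw [EuclideanSpace.dist_eq]
        congr 1
        exact Finset.sum_congr rfl fun i _ => by rw [Real.dist_eq, sq_abs]
      rw [hyd, Fin.sum_univ_three]
      apply Real.sqrt_le_sqrt
      rcases hy with ⟨e1, e2⟩ | ⟨e1, e2⟩ | ⟨e1, e2⟩
      · calc m ≤ r 1 ^ 2 + r 2 ^ 2 := le_trans (min_le_left _ _) (min_le_left _ _)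
          _ ≤ (r 0 - y 0) ^ 2 + (r 1 - y 1) ^ 2 + (r 2 - y 2) ^ 2 := by
              rw [e1, e2]; nlinarith [sq_nonneg (r 0 - y 0)]
      · calc m ≤ r 0 ^ 2 + r 2 ^ 2 := le_trans (min_le_left _ _) (min_le_right _ _)
          _ ≤ (r 0 - y 0) ^ 2 + (r 1 - y 1) ^ 2 + (r 2 - y 2) ^ 2 := by
              rw [e1, e2]; nlinarith [sq_nonneg (r 1 - y 1)]
      · calc m ≤ r 0 ^ 2 + r 1 ^ 2 := min_le_right _ _
          _ ≤ (r 0 - y 0) ^ 2 + (r 1 - y 1) ^ 2 + (r 2 - y 2) ^ 2 := by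
              rw [e1, e2]; nlinarith [sq_nonneg (r 2 - y 2)]
  rw [key, Real.sq_sqrt hm0]
end

section
/- Under local Phase Damping with parameter p applied to a Bell-diagonal state with |r₂|,|r₃| < |r₁| and r₁ ≠ 0, the function p ↦ min over i of (sum of squares of the other two components of the evolved correlation vector) exhibits a non-smooth 'sudden change' at p₁₃ = 1 − √(|r₃|/|r₁|): for p ≤ p₁₃ the minimum is r₂²(1−p)⁴ + r₃², and for p ≥ p₁₃ it is (r₁²+r₂²)(1−p)⁴. -/
/-- Under local Phase Damping (evolved correlation vector
`(r₁(1−p)², r₂(1−p)², r₃)`), for an initial Bell-diagonal state with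
`|r₂|,|r₃| < |r₁|` and `r₁ ≠ 0`, the Hilbert–Schmidt geometric discord
`D(p) = min{D₁,D₂,D₃}` exhibits a sudden change at `p₁₃ = 1 − √(|r₃|/|r₁|)`:
for `p ≤ p₁₃` the minimum is `r₂²(1−p)⁴ + r₃²`, and for `p ≥ p₁₃` it is
`(r₁²+r₂²)(1−p)⁴`. -/
theorem phaseDamping_discord_sudden_change (r1 r2 r3 : ℝ)
    (h2 : |r2| < |r1|) (h3 : |r3| < |r1|) (h1 : r1 ≠ 0) :
    ∀ p : ℝ, 0 ≤ p → p ≤ 1 →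
      (p ≤ 1 - Real.sqrt (|r3| / |r1|) →
        min (min (r2 ^ 2 * (1 - p) ^ 4 + r3 ^ 2) (r1 ^ 2 * (1 - p) ^ 4 + r3 ^ 2))
            ((r1 ^ 2 + r2 ^ 2) * (1 - p) ^ 4)
          = r2 ^ 2 * (1 - p) ^ 4 + r3 ^ 2) ∧
      (1 - Real.sqrt (|r3| / |r1|) ≤ p →
        min (min (r2 ^ 2 * (1 - p) ^ 4 + r3 ^ 2) (r1 ^ 2 * (1 - p) ^ 4 + r3 ^ 2))
            ((r1 ^ 2 + r2 ^ 2) * (1 - p) ^ 4)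
          = (r1 ^ 2 + r2 ^ 2) * (1 - p) ^ 4) := by
  intro p hp0 hp1
  have hr1 : (0:ℝ) < |r1| := abs_pos.mpr h1
  have hdivnn : (0:ℝ) ≤ |r3| / |r1| := div_nonneg (abs_nonneg r3) (abs_nonneg r1)
  have hsq : Real.sqrt (|r3| / |r1|) ^ 2 = |r3| / |r1| := Real.sq_sqrt hdivnn
  have hsnn : (0:ℝ) ≤ Real.sqrt (|r3| / |r1|) := Real.sqrt_nonneg _
  have h22 : r2 ^ 2 ≤ r1 ^ 2 := by
    nlinarith [sq_abs r1, sq_abs r2, abs_nonneg r2]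
  have hq : (0:ℝ) ≤ 1 - p := by linarith
  constructor
  · intro hle
    have hs : Real.sqrt (|r3| / |r1|) ≤ 1 - p := by linarith
    have h4 : |r3| / |r1| ≤ (1 - p) ^ 2 := by nlinarith
    have h5 : |r3| ≤ |r1| * (1 - p) ^ 2 := by
      rw [div_le_iff₀ hr1] at h4; linarith [h4]
    have key : r3 ^ 2 ≤ r1 ^ 2 * (1 - p) ^ 4 := by
      calc r3 ^ 2 = |r3| ^ 2 := (sq_abs r3).symm
        _ ≤ (|r1| * (1 - p) ^ 2) ^ 2 := pow_le_pow_left₀ (abs_nonneg r3) h5 2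
        _ = r1 ^ 2 * (1 - p) ^ 4 := by rw [mul_pow, sq_abs]; ring
    have hq4 : (0:ℝ) ≤ (1 - p) ^ 4 := by positivity
    have h12 : r2 ^ 2 * (1 - p) ^ 4 ≤ r1 ^ 2 * (1 - p) ^ 4 :=
      mul_le_mul_of_nonneg_right h22 hq4
    rw [min_eq_left (by linarith :
        r2 ^ 2 * (1 - p) ^ 4 + r3 ^ 2 ≤ r1 ^ 2 * (1 - p) ^ 4 + r3 ^ 2),
      min_eq_left (by linarith : r2 ^ 2 * (1 - p) ^ 4 + r3 ^ 2 ≤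
        (r1 ^ 2 + r2 ^ 2) * (1 - p) ^ 4)]
  · intro hge
    have hs : 1 - p ≤ Real.sqrt (|r3| / |r1|) := by linarith
    have h4 : (1 - p) ^ 2 ≤ |r3| / |r1| := by nlinarith
    have h5 : |r1| * (1 - p) ^ 2 ≤ |r3| := by
      rw [le_div_iff₀ hr1] at h4; linarith [h4]
    have key : r1 ^ 2 * (1 - p) ^ 4 ≤ r3 ^ 2 := by
      calc r1 ^ 2 * (1 - p) ^ 4 = (|r1| * (1 - p) ^ 2) ^ 2 := by rw [mul_pow, sq_abs]; ring
        _ ≤ |r3| ^ 2 := pow_le_pow_left₀ (mul_nonneg (abs_nonneg r1) (sq_nonneg (1 - p))) h5 2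
        _ = r3 ^ 2 := sq_abs r3
    have hq4 : (0:ℝ) ≤ (1 - p) ^ 4 := by positivity
    have h12 : r2 ^ 2 * (1 - p) ^ 4 ≤ r1 ^ 2 * (1 - p) ^ 4 :=
      mul_le_mul_of_nonneg_right h22 hq4
    refine min_eq_right (le_min ?_ ?_)
    · linarith
    · linarith
end

section
/- Under symmetric local Phase Damping with parameter p on an initial entangled Bell-diagonal state with correlation vector (r₁,r₂,r₃) and |r₁|+|r₂|+|r₃| > 1, the evolved state becomes separable exactly at p_SD = 1 − √((1−|r₃|)/(|r₁|+|r₂|)); i.e., (|r₁|+|r₂|)(1−p)² + |r₃| ≥ 1 iff p ≤ p_SD (for 0 ≤ p ≤ 1 and |r₃| < 1). -/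
/-- Under symmetric local Phase Damping (evolved correlation vector
`(r₁(1−p)², r₂(1−p)², r₃)`) of an initially entangled Bell-diagonal state
(`|r₁|+|r₂|+|r₃| > 1`, `|r₃| < 1`), the evolved state is entangled
(`(|r₁|+|r₂|)(1−p)² + |r₃| ≥ 1`) iff `p ≤ p_SD = 1 − √((1−|r₃|)/(|r₁|+|r₂|))`. -/
theorem phaseDamping_sudden_death (r1 r2 r3 p : ℝ)
    (hp0 : 0 ≤ p) (hp1 : p ≤ 1) (h3 : |r3| < 1)
    (hent : 1 < |r1| + |r2| + |r3|) :
    1 ≤ (|r1| + |r2|) * (1 - p) ^ 2 + |r3| ↔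
      p ≤ 1 - Real.sqrt ((1 - |r3|) / (|r1| + |r2|)) := by
  set s := |r1| + |r2| with hs
  have hsp : 0 < s := by linarith
  have key : 1 ≤ s * (1 - p) ^ 2 + |r3| ↔ (1 - |r3|) / s ≤ (1 - p) ^ 2 := by
    rw [div_le_iff₀ hsp]
    constructor <;> intro h <;> nlinarith
  have h2 : p ≤ 1 - Real.sqrt ((1 - |r3|) / s) ↔
      Real.sqrt ((1 - |r3|) / s) ≤ 1 - p := by constructor <;> intro h <;> linarith
  rw [key, h2, Real.sqrt_le_iff]
  constructor
  · intro h; exact ⟨by linarith, h⟩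
  · rintro ⟨_, h⟩; exact h
end

section
/- Under symmetric local Depolarizing with parameter p on an initial entangled Bell-diagonal state with |r₁|+|r₂|+|r₃| > 1, entanglement sudden death occurs at p_SD = 1 − 1/√(|r₁|+|r₂|+|r₃|): the evolved state is separable iff p ≥ p_SD (for p ∈ [0,1]). -/
/-- Under symmetric local Depolarizing (evolved correlation vector
`(1−p)²(r₁,r₂,r₃)`) of an initially entangled Bell-diagonal state
(`|r₁|+|r₂|+|r₃| > 1`), entanglement sudden death occurs at
`p_SD = 1 − 1/√(|r₁|+|r₂|+|r₃|)`: the evolved state is separable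
(`(1−p)²(|r₁|+|r₂|+|r₃|) ≤ 1`) iff `p ≥ p_SD`. -/
theorem depolarizing_sudden_death (r1 r2 r3 p : ℝ)
    (hp0 : 0 ≤ p) (hp1 : p ≤ 1)
    (hent : 1 < |r1| + |r2| + |r3|) :
    (1 - p) ^ 2 * (|r1| + |r2| + |r3|) ≤ 1 ↔
      1 - 1 / Real.sqrt (|r1| + |r2| + |r3|) ≤ p := by
  set s := |r1| + |r2| + |r3| with hs
  have hs0 : (0:ℝ) < s := lt_trans one_pos hent
  have hsq : 0 < Real.sqrt s := Real.sqrt_pos.mpr hs0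
  have hsqsq : Real.sqrt s ^ 2 = s := Real.sq_sqrt hs0.le
  have h1p : 0 ≤ 1 - p := by linarith
  constructor
  · intro h
    have h2 : (1 - p) ^ 2 ≤ (1 / Real.sqrt s) ^ 2 := by
      rw [div_pow, hsqsq, one_pow, le_div_iff₀ hs0]
      linarith
    have h3 : 1 - p ≤ 1 / Real.sqrt s := by
      have := Real.sqrt_le_sqrt h2
      rwa [Real.sqrt_sq h1p, Real.sqrt_sq (by positivity)] at this
    linarith
  · intro h
    have h3 : 1 - p ≤ 1 / Real.sqrt s := by linarith
    have h2 : (1 - p) ^ 2 ≤ (1 / Real.sqrt s) ^ 2 :=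
      pow_le_pow_left₀ h1p h3 2
    rw [div_pow, hsqsq, one_pow] at h2
    calc (1 - p) ^ 2 * s ≤ (1 / s) * s := by nlinarith
      _ = 1 := by field_simp
end

section
/- The trace-norm geometric discord of a Bell-diagonal state with correlation vector (r₁,r₂,r₃), defined as the minimal trace distance to a classical-classical Bell-diagonal state, equals the intermediate value of {|r₁|, |r₂|, |r₃|}. -/
open Matrix ComplexOrder Kronecker

/-- The trace norm of a matrix: `‖A‖₁ = Tr √(AᴴA)`. -/
noncomputable def traceNorm {n : Type*} [Fintype n] [DecidableEq n]
    (A : Matrix n n ℂ) : ℝ :=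
  (((Matrix.posSemidef_conjTranspose_mul_self A).1.eigenvectorUnitary.1 *
      diagonal (((↑) : ℝ → ℂ) ∘ (√·) ∘ (Matrix.posSemidef_conjTranspose_mul_self A).1.eigenvalues) *
      (star (Matrix.posSemidef_conjTranspose_mul_self A).1.eigenvectorUnitary : Matrix n n ℂ)).trace).re

/-- The intermediate (median) value of three real numbers. -/
noncomputable def intermediate (a b c : ℝ) : ℝ :=
  max (min a b) (min (max a b) c)

/-!
The Bell basis diagonalises every `σᵢ ⊗ σᵢ` simultaneously, so `BD r` has the eigenvalues
`(1 + a r₀ - a b r₁ + b r₂)/4` for `a, b = ±1`, and the trace norm of `BD r - BD c` is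
`(1/4) ∑ |x ± y ± z|` with `(x, y, z) = r - c`. If `c` lies on the `k`-th axis,
pairing the terms as `|v + u| + |v - u| ≥ 2|v|` bounds this below by the larger of the two other
`|rᵢ|`, with equality at `c_k = r_k`. Taking `k` with `|r_k|` largest gives the intermediate
value, and `BD c` is then a state because positivity of `BD r` forces `|r_k| ≤ 1`.
-/

section UnitaryConjugation

variable {n : Type*} [Fintype n] [DecidableEq n]

/-- `traceNorm A` is by definition `√(AᴴA)` computed by the Hermitian functional calculus, and
positive square roots are unique. -/
theorem traceNorm_eq_re_trace_of_mul_self_eq {A S : Matrix n n ℂ} (hS : S.PosSemidef)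
    (h : S * S = Aᴴ * A) : traceNorm A = S.trace.re := by
  have hA := posSemidef_conjTranspose_mul_self A
  have hS_sqrt : S = hA.1.cfc Real.sqrt := by
    open scoped MatrixOrder in
    rw [← IsHermitian.cfc_eq, ← cfcₙ_eq_cfc, ← CFC.sqrt_eq_real_sqrt _ hA.nonneg]
    exact (CFC.sqrt_unique h hS.nonneg).symm
  rw [hS_sqrt]
  rfl

variable {U : Matrix n n ℂ}

theorem conj_diagonal_mul_conj_diagonal (hU : U ∈ unitaryGroup n ℂ) (d e : n → ℂ) :
    U * diagonal d * star U * (U * diagonal e * star U) =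
      U * diagonal (fun i => d i * e i) * star U := by
  simp only [mul_assoc]
  rw [← mul_assoc (star U) U, hU.1, one_mul, ← mul_assoc (diagonal d), diagonal_mul_diagonal]

theorem traceNorm_unitary_conj_diagonal (hU : U ∈ unitaryGroup n ℂ) (d : n → ℝ) :
    traceNorm (U * diagonal (fun i => (d i : ℂ)) * star U) = ∑ i, |d i| := by
  have hS : (U * diagonal (fun i => ((|d i| : ℝ) : ℂ)) * star U).PosSemidef :=
    (posSemidef_diagonal_iff.2 fun i =>
      Complex.zero_le_real.2 (abs_nonneg _)).mul_mul_conjTranspose_same U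
  have hA : (U * diagonal (fun i => (d i : ℂ)) * star U).IsHermitian :=
    isHermitian_mul_mul_conjTranspose U (isHermitian_diagonal_iff.2 fun i => Complex.conj_ofReal _)
  rw [traceNorm_eq_re_trace_of_mul_self_eq hS]
  · rw [trace_mul_cycle, hU.1, one_mul, trace_diagonal]
    simp
  · rw [hA.eq, conj_diagonal_mul_conj_diagonal hU, conj_diagonal_mul_conj_diagonal hU]
    simp only [← Complex.ofReal_mul, abs_mul_abs_self]

theorem posSemidef_unitary_conj_diagonal_iff (hU : U ∈ unitaryGroup n ℂ) (d : n → ℝ) :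
    (U * diagonal (fun i => (d i : ℂ)) * star U).PosSemidef ↔ ∀ i, 0 ≤ d i := by
  rw [IsUnit.posSemidef_star_right_conjugate_iff (Unitary.isUnit_coe (U := ⟨U, hU⟩)),
    posSemidef_diagonal_iff]
  simp only [Complex.zero_le_real]

end UnitaryConjugation

/-- Column `(i, j)` is the Bell state `(|0 j⟩ + (-1)^i |1, j + 1⟩)/√2`. -/
noncomputable def bellBasis : Matrix (Fin 2 × Fin 2) (Fin 2 × Fin 2) ℂ :=
  of fun x k => if x.2 = k.2 + x.1 then (-1) ^ ((k.1 : ℕ) * x.1) / (√2 : ℝ) else 0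

def bellSpectrum (r : Fin 3 → ℝ) (k : Fin 2 × Fin 2) : ℝ :=
  (-1) ^ (k.1 : ℕ) * r 0 - (-1) ^ ((k.1 : ℕ) + k.2) * r 1 + (-1) ^ (k.2 : ℕ) * r 2

theorem ofReal_sqrt_two_inv_sq : ((√2 : ℝ) : ℂ)⁻¹ ^ 2 = 1 / 2 := by
  rw [inv_pow, ← Complex.ofReal_pow, Real.sq_sqrt zero_le_two]
  norm_num

theorem bellBasis_mem_unitaryGroup : bellBasis ∈ unitaryGroup (Fin 2 × Fin 2) ℂ := by
  rw [mem_unitaryGroup_iff]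
  ext ⟨a, b⟩ ⟨c, d⟩
  fin_cases a <;> fin_cases b <;> fin_cases c <;> fin_cases d <;>
    simp [bellBasis, mul_apply, Fintype.sum_prod_type] <;> ring_nf <;>
    simp only [ofReal_sqrt_two_inv_sq] <;> norm_num

theorem BD_eq_bellBasis_conj (r : Fin 3 → ℝ) :
    BD r = bellBasis * diagonal (fun k => (((1 + bellSpectrum r k) / 4 : ℝ) : ℂ)) *
      star bellBasis := by
  ext ⟨a, b⟩ ⟨c, d⟩
  fin_cases a <;> fin_cases b <;> fin_cases c <;> fin_cases d <;>
    simp [BD, bellBasis, bellSpectrum, pauli, mul_apply, Fintype.sum_prod_type,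
      Fin.sum_univ_three] <;> ring_nf <;> simp only [ofReal_sqrt_two_inv_sq] <;> ring

theorem BD_sub_BD_eq_bellBasis_conj (r c : Fin 3 → ℝ) :
    BD r - BD c = bellBasis * diagonal (fun k => ((bellSpectrum (r - c) k / 4 : ℝ) : ℂ)) *
      star bellBasis := by
  rw [BD_eq_bellBasis_conj, BD_eq_bellBasis_conj, ← sub_mul, ← mul_sub, diagonal_sub]
  congr 3
  funext k
  push_cast [bellSpectrum, Pi.sub_apply]
  ring

theorem abs_bellSpectrum_le (c : Fin 3 → ℝ) (k : Fin 2 × Fin 2) :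
    |bellSpectrum c k| ≤ |c 0| + |c 1| + |c 2| := by
  rw [bellSpectrum, sub_eq_add_neg]
  refine (abs_add_three _ _ _).trans ?_
  simp [abs_mul]

theorem posSemidef_BD_iff (r : Fin 3 → ℝ) :
    (BD r).PosSemidef ↔ ∀ k, 0 ≤ 1 + bellSpectrum r k := by
  rw [BD_eq_bellBasis_conj, posSemidef_unitary_conj_diagonal_iff bellBasis_mem_unitaryGroup]
  exact forall_congr' fun k => ⟨fun h => by linarith, fun h => by linarith⟩

theorem abs_le_one_of_posSemidef_BD {r : Fin 3 → ℝ} (hr : (BD r).PosSemidef) (i : Fin 3) :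
    |r i| ≤ 1 := by
  have h := (posSemidef_BD_iff r).1 hr
  have h₀₀ := h (0, 0)
  have h₀₁ := h (0, 1)
  have h₁₀ := h (1, 0)
  have h₁₁ := h (1, 1)
  simp [bellSpectrum] at h₀₀ h₀₁ h₁₀ h₁₁
  rw [abs_le]
  fin_cases i <;> simp <;> constructor <;> linarith

theorem posSemidef_BD_of_sum_abs_le_one {c : Fin 3 → ℝ} (hc : |c 0| + |c 1| + |c 2| ≤ 1) :
    (BD c).PosSemidef :=
  (posSemidef_BD_iff c).2 fun k => by
    linarith [neg_abs_le (bellSpectrum c k), abs_bellSpectrum_le c k]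

def signSum (x y z : ℝ) : ℝ := |x + y + z| + |x + y - z| + |x - y + z| + |x - y - z|

theorem signSum_rotate (x y z : ℝ) : signSum y z x = signSum x y z := by
  simp only [signSum, abs_sub_comm (y + z) x, abs_sub_comm (y - z) x]
  ring_nf

theorem signSum_swap (x y z : ℝ) : signSum x z y = signSum x y z := by
  simp only [signSum]
  ring_nf

theorem abs_add_add_abs_sub (x y : ℝ) : |x + y| + |x - y| = 2 * max |x| |y| := by
  grind [abs_of_nonneg, abs_of_neg]

theorem four_mul_max_abs_le_signSum (x y z : ℝ) : 4 * max |x| |y| ≤ signSum x y z := by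
  have h₁ : 2 * |x + y| ≤ |x + y + z| + |x + y - z| := by
    simpa [← two_mul, abs_mul] using abs_add_le (x + y + z) (x + y - z)
  have h₂ : 2 * |x - y| ≤ |x - y + z| + |x - y - z| := by
    simpa [← two_mul, abs_mul] using abs_add_le (x - y + z) (x - y - z)
  rw [signSum]
  linarith [abs_add_add_abs_sub x y]

theorem signSum_zero_right (x y : ℝ) : signSum x y 0 = 4 * max |x| |y| := by
  simp only [signSum, add_zero, sub_zero]
  linarith [abs_add_add_abs_sub x y]

theorem sum_abs_bellSpectrum (s : Fin 3 → ℝ) :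
    ∑ k, |bellSpectrum s k| = signSum (s 0) (s 1) (s 2) := by
  simp [Fintype.sum_prod_type, bellSpectrum, signSum]
  rw [← abs_neg (-s 0 + s 1 + s 2), ← abs_neg (-s 0 - s 1 + -s 2)]
  ring_nf

theorem traceNorm_BD_sub_BD (r c : Fin 3 → ℝ) :
    traceNorm (BD r - BD c) = signSum (r 0 - c 0) (r 1 - c 1) (r 2 - c 2) / 4 := by
  rw [BD_sub_BD_eq_bellBasis_conj, traceNorm_unitary_conj_diagonal bellBasis_mem_unitaryGroup]
  simp only [abs_div, ← Finset.sum_div, sum_abs_bellSpectrum, Pi.sub_apply]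
  norm_num

section intermediate

variable {a b c : ℝ}

theorem intermediate_le_max_left_mid : intermediate a b c ≤ max a b := by
  unfold intermediate; grind

theorem intermediate_le_max_left_right : intermediate a b c ≤ max a c := by
  unfold intermediate; grind

theorem intermediate_le_max_mid_right : intermediate a b c ≤ max b c := by
  unfold intermediate; grind

theorem intermediate_eq_max_mid_right (hb : b ≤ a) (hc : c ≤ a) :
    intermediate a b c = max b c := by
  unfold intermediate; grind

theorem intermediate_eq_max_left_right (ha : a ≤ b) (hc : c ≤ b) :
    intermediate a b c = max a c := by
  unfold intermediate; grind

theorem intermediate_eq_max_left_mid (ha : a ≤ c) (hb : b ≤ c) :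
    intermediate a b c = max a b := by
  unfold intermediate; grind

end intermediate

def OnAxis (c : Fin 3 → ℝ) : Prop :=
  (c 1 = 0 ∧ c 2 = 0) ∨ (c 0 = 0 ∧ c 2 = 0) ∨ (c 0 = 0 ∧ c 1 = 0)

theorem intermediate_le_traceNorm_BD_sub (r : Fin 3 → ℝ) {c : Fin 3 → ℝ} (hc : OnAxis c) :
    intermediate |r 0| |r 1| |r 2| ≤ traceNorm (BD r - BD c) := by
  rw [traceNorm_BD_sub_BD]
  rcases hc with ⟨h₁, h₂⟩ | ⟨h₀, h₂⟩ | ⟨h₀, h₁⟩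
  · rw [h₁, h₂, sub_zero, sub_zero, ← signSum_rotate]
    linarith [intermediate_le_max_mid_right (a := |r 0|) (b := |r 1|) (c := |r 2|),
      four_mul_max_abs_le_signSum (r 1) (r 2) (r 0 - c 0)]
  · rw [h₀, h₂, sub_zero, sub_zero, ← signSum_swap]
    linarith [intermediate_le_max_left_right (a := |r 0|) (b := |r 1|) (c := |r 2|),
      four_mul_max_abs_le_signSum (r 0) (r 2) (r 1 - c 1)]
  · rw [h₀, h₁, sub_zero, sub_zero]
    linarith [intermediate_le_max_left_mid (a := |r 0|) (b := |r 1|) (c := |r 2|),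
      four_mul_max_abs_le_signSum (r 0) (r 1) (r 2 - c 2)]

theorem exists_onAxis_traceNorm_BD_sub_eq_intermediate {r : Fin 3 → ℝ}
    (hr : ∀ i, |r i| ≤ 1) :
    ∃ c, (BD c).PosSemidef ∧ OnAxis c ∧
      traceNorm (BD r - BD c) = intermediate |r 0| |r 1| |r 2| := by
  have axis₀ (h₁ : |r 1| ≤ |r 0|) (h₂ : |r 2| ≤ |r 0|) :
      ∃ c, (BD c).PosSemidef ∧ OnAxis c ∧
        traceNorm (BD r - BD c) = intermediate |r 0| |r 1| |r 2| :=
    ⟨![r 0, 0, 0], posSemidef_BD_of_sum_abs_le_one (by simpa using hr 0),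
      Or.inl ⟨rfl, rfl⟩, by
      rw [traceNorm_BD_sub_BD, intermediate_eq_max_mid_right h₁ h₂, ← signSum_rotate]
      simp [signSum_zero_right]⟩
  have axis₁ (h₀ : |r 0| ≤ |r 1|) (h₂ : |r 2| ≤ |r 1|) :
      ∃ c, (BD c).PosSemidef ∧ OnAxis c ∧
        traceNorm (BD r - BD c) = intermediate |r 0| |r 1| |r 2| :=
    ⟨![0, r 1, 0], posSemidef_BD_of_sum_abs_le_one (by simpa using hr 1),
      Or.inr (Or.inl ⟨rfl, rfl⟩), by
      rw [traceNorm_BD_sub_BD, intermediate_eq_max_left_right h₀ h₂, ← signSum_swap]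
      simp [signSum_zero_right]⟩
  have axis₂ (h₀ : |r 0| ≤ |r 2|) (h₁ : |r 1| ≤ |r 2|) :
      ∃ c, (BD c).PosSemidef ∧ OnAxis c ∧
        traceNorm (BD r - BD c) = intermediate |r 0| |r 1| |r 2| :=
    ⟨![0, 0, r 2], posSemidef_BD_of_sum_abs_le_one (by simpa using hr 2),
      Or.inr (Or.inr ⟨rfl, rfl⟩), by
      rw [traceNorm_BD_sub_BD, intermediate_eq_max_left_mid h₀ h₁]
      simp [signSum_zero_right]⟩
  rcases le_total |r 1| |r 2| with h₁₂ | h₂₁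
  · rcases le_total |r 0| |r 2| with h₀₂ | h₂₀
    · exact axis₂ h₀₂ h₁₂
    · exact axis₀ (h₁₂.trans h₂₀) h₂₀
  · rcases le_total |r 0| |r 1| with h₀₁ | h₁₀
    · exact axis₁ h₀₁ h₂₁
    · exact axis₀ h₁₀ (h₂₁.trans h₁₀)

/-- The trace-norm geometric discord of a Bell-diagonal state — the minimal trace
distance to a classical-classical (zero-discord) Bell-diagonal state, i.e. one whose
correlation vector lies on a coordinate axis — equals the intermediate value of
`{|r₁|, |r₂|, |r₃|}`. -/
theorem traceNorm_discord_BD (r : Fin 3 → ℝ) (hr : (BD r).PosSemidef) :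
    IsLeast
      {t : ℝ | ∃ c : Fin 3 → ℝ, (BD c).PosSemidef ∧
        ((c 1 = 0 ∧ c 2 = 0) ∨ (c 0 = 0 ∧ c 2 = 0) ∨ (c 0 = 0 ∧ c 1 = 0)) ∧
        t = traceNorm (BD r - BD c)}
      (intermediate |r 0| |r 1| |r 2|) := by
  obtain ⟨c, hc, hc_axis, hc_dist⟩ :=
    exists_onAxis_traceNorm_BD_sub_eq_intermediate (abs_le_one_of_posSemidef_BD hr)
  refine ⟨⟨c, hc, hc_axis, hc_dist.symm⟩, ?_⟩
  rintro _ ⟨c, -, hc_axis, rfl⟩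
  exact intermediate_le_traceNorm_BD_sub r hc_axis
end
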